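/- arXiv:1406.0670 — 3 statements merged into one kernel-verified Lean document; each statement's English description precedes it below -/
import Mathlib

section
/- The infinite Fibonacci word f is not ultimately periodic; that is, there do not exist an integer p ≥ 1 and an index n ≥ 0 such that f[i] = f[i+p] for all i ≥ n. -/
/-- The Fibonacci morphism φ: 0 ↦ 01, 1 ↦ 0. -/
def fibPhi (w : List ℕ) : List ℕ := (w.map (fun c => if c = 0 then [0, 1] else [0])).flatten

/-- The infinite Fibonacci word f = 0100101001001⋯, the fixed point of φ starting with 0. -/
def fibWord (i : ℕ) : ℕ := ((fibPhi^[i + 2]) [0]).getD i 0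

/-- A finite word is a factor of the infinite Fibonacci word. -/
def IsFibFactor (x : List ℕ) : Prop :=
  ∃ i : ℕ, x = (List.range x.length).map (fun t => fibWord (i + t))

/-!
If `f` had eventual period `p` with `c` zeros per period, then `p · #{i < N | f i = 0} - c · N`
would be a bounded function of `N`. The prefix `φ^m(0)` of `f` has length `F (m+2)` and contains
`F (m+1)` zeros, so `t m = p · F (m+1) - c · F (m+2)` is a bounded integer sequence satisfying the
Fibonacci recurrence. Such a sequence vanishes: two consecutive terms of the same sign make it grow
without bound, while strictly alternating signs make `|t m|` strictly decrease. But
`t 0 = p - c` and `t 1 = p - 2c` vanish together only when `p = 0`.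
-/

open Finset

def fibPrefix (m : ℕ) : List ℕ := fibPhi^[m] [0]

lemma fibPhi_cons (x : ℕ) (w : List ℕ) :
    fibPhi (x :: w) = (if x = 0 then [0, 1] else [0]) ++ fibPhi w := by
  simp [fibPhi]

lemma fibPhi_append (u v : List ℕ) : fibPhi (u ++ v) = fibPhi u ++ fibPhi v := by
  simp [fibPhi]

lemma count_zero_fibPhi (w : List ℕ) : (fibPhi w).count 0 = w.length := by
  induction w with
  | nil => rfl
  | cons x w ih => by_cases hx : x = 0 <;> simp [fibPhi_cons, hx, ih]

lemma length_fibPhi (w : List ℕ) : (fibPhi w).length = w.length + w.count 0 := by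
  induction w with
  | nil => rfl
  | cons x w ih => by_cases hx : x = 0 <;> simp [fibPhi_cons, hx, ih] <;> omega

lemma fibPrefix_succ (m : ℕ) : fibPrefix (m + 1) = fibPhi (fibPrefix m) :=
  Function.iterate_succ_apply' _ _ _

lemma length_fibPrefix : ∀ m, (fibPrefix m).length = Nat.fib (m + 2)
  | 0 => rfl
  | 1 => rfl
  | m + 2 => by
    rw [fibPrefix_succ, length_fibPhi, fibPrefix_succ, count_zero_fibPhi, ← fibPrefix_succ,
      length_fibPrefix (m + 1), length_fibPrefix m, Nat.fib_add_two (n := m + 2)]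
    ring

lemma count_zero_fibPrefix : ∀ m, (fibPrefix m).count 0 = Nat.fib (m + 1)
  | 0 => rfl
  | m + 1 => by rw [fibPrefix_succ, count_zero_fibPhi, length_fibPrefix]

lemma fibPhi_prefix {u v : List ℕ} (h : u <+: v) : fibPhi u <+: fibPhi v := by
  obtain ⟨w, rfl⟩ := h
  exact fibPhi_append u w ▸ List.prefix_append _ _

lemma fibPrefix_prefix_succ : ∀ m, fibPrefix m <+: fibPrefix (m + 1)
  | 0 => ⟨[1], rfl⟩
  | m + 1 => by simpa only [fibPrefix_succ] using fibPhi_prefix (fibPrefix_prefix_succ m)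

lemma fibPrefix_prefix_of_le {m m' : ℕ} (h : m ≤ m') : fibPrefix m <+: fibPrefix m' := by
  induction m', h using Nat.le_induction with
  | base => exact List.prefix_refl _
  | succ k _ ih => exact ih.trans (fibPrefix_prefix_succ k)

lemma getElem_fibPrefix {m i : ℕ} (hi : i < (fibPrefix m).length) :
    (fibPrefix m)[i] = fibWord i := by
  have hi' : i < (fibPrefix (i + 2)).length := by
    have : i + 2 ≤ Nat.fib (i + 2 + 2) := Nat.fib_add_two_strictMono.id_le _
    rw [length_fibPrefix]
    omega
  have hm := fibPrefix_prefix_of_le (le_max_left m (i + 2))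
  have hi2 := fibPrefix_prefix_of_le (le_max_right m (i + 2))
  change _ = (fibPrefix (i + 2)).getD i 0
  rw [List.getD_eq_getElem _ _ hi', hm.getElem hi, hi2.getElem hi']

lemma map_range_fibWord (m : ℕ) : (List.range (Nat.fib (m + 2))).map fibWord = fibPrefix m := by
  refine List.ext_getElem (by simp [length_fibPrefix]) fun i _ hi => ?_
  simp [getElem_fibPrefix hi]

lemma count_map_range_eq_sum {α : Type*} [DecidableEq α] (f : ℕ → α) (x : α) (N : ℕ) :
    ((List.range N).map f).count x = ∑ i ∈ range N, if f i = x then 1 else 0 := by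
  induction N with
  | zero => rfl
  | succ N ih =>
    rw [List.range_succ, List.map_append, List.count_append, sum_range_succ, ← ih]
    by_cases h : f N = x <;> simp [h]

lemma sum_range_fib_indicator_fibWord_zero (m : ℕ) :
    ∑ i ∈ range (Nat.fib (m + 2)), (if fibWord i = 0 then 1 else 0 : ℤ) = Nat.fib (m + 1) := by
  have h := count_map_range_eq_sum fibWord 0 (Nat.fib (m + 2))
  rw [map_range_fibWord, count_zero_fibPrefix] at h
  exact_mod_cast h.symm

section Periodic

variable {n p : ℕ}

lemma sum_range_add_period {M : Type*} [AddCommMonoid M] {a : ℕ → M}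
    (ha : ∀ i ≥ n, a (i + p) = a i) {N : ℕ} (hN : n ≤ N) :
    ∑ i ∈ range (N + p), a i = ∑ i ∈ range N, a i + ∑ i ∈ range p, a (n + i) := by
  induction N, hN using Nat.le_induction with
  | base => exact sum_range_add a n p
  | succ N hN ih =>
    rw [show N + 1 + p = N + p + 1 by omega, sum_range_succ, ih, sum_range_succ, ha N hN,
      add_right_comm]

lemma finite_range_of_eventually_periodic {α : Type*} {h : ℕ → α} (hp : 0 < p)
    (hh : ∀ N ≥ n, h (N + p) = h N) : (Set.range h).Finite := by
  refine ((Set.finite_Iio (n + p)).image h).subset ?_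
  rintro _ ⟨N, rfl⟩
  induction N using Nat.strong_induction_on with
  | _ N ih =>
    by_cases hN : N < n + p
    · exact ⟨N, hN, rfl⟩
    · rw [← Nat.sub_add_cancel (show p ≤ N by omega), hh (N - p) (by omega)]
      exact ih (N - p) (by omega)

lemma exists_abs_mul_sum_range_sub_le {a : ℕ → ℤ} (hp : 0 < p)
    (ha : ∀ i ≥ n, a (i + p) = a i) : ∃ c B : ℤ, ∀ N : ℕ, |p * ∑ i ∈ range N, a i - c * N| ≤ B := by
  have hfin := finite_range_of_eventually_periodic (n := n) (h := fun N : ℕ =>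
    p * ∑ i ∈ range N, a i - (∑ i ∈ range p, a (n + i)) * N) hp fun N hN => by
      rw [sum_range_add_period ha hN]; push_cast; ring
  obtain ⟨B, hB⟩ := (hfin.image abs).bddAbove
  exact ⟨_, B, fun N => hB ⟨_, ⟨N, rfl⟩, rfl⟩⟩

end Periodic

section FibRecurrence

variable {t : ℕ → ℤ}

lemma lt_of_fibRec_of_nonneg_of_pos (ht : ∀ m, t (m + 2) = t m + t (m + 1)) {m : ℕ}
    (h0 : 0 ≤ t m) (h1 : 0 < t (m + 1)) (k : ℕ) : (k : ℤ) < t (m + 2 + k) := by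
  suffices 0 < t (m + 1 + k) ∧ (k : ℤ) < t (m + 2 + k) from this.2
  induction k with
  | zero => simpa using ⟨h1, ht m ▸ add_pos_of_nonneg_of_pos h0 h1⟩
  | succ k ih =>
    have := ht (m + 1 + k)
    rw [show m + 1 + k + 1 = m + 2 + k by omega, show m + 1 + k + 2 = m + 2 + (k + 1) by omega]
      at this
    rw [show m + 1 + (k + 1) = m + 2 + k by omega]
    push_cast
    omega

lemma not_nonneg_and_pos_of_fibRec_of_abs_le (ht : ∀ m, t (m + 2) = t m + t (m + 1)) {B : ℤ}
    (hB : ∀ m, |t m| ≤ B) (m : ℕ) : ¬ (0 ≤ t m ∧ 0 < t (m + 1)) := by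
  rintro ⟨h0, h1⟩
  have hlt := lt_of_fibRec_of_nonneg_of_pos ht h0 h1 B.toNat
  have hle := (le_abs_self _).trans (hB (m + 2 + B.toNat))
  omega

lemma eq_zero_of_fibRec_of_abs_le (ht : ∀ m, t (m + 2) = t m + t (m + 1)) {B : ℤ}
    (hB : ∀ m, |t m| ≤ B) (m₀ : ℕ) : t m₀ = 0 := by
  have hsign : ∀ m, ¬ (0 ≤ t m ∧ 0 < t (m + 1)) ∧ ¬ (t m ≤ 0 ∧ t (m + 1) < 0) := fun m =>
    ⟨not_nonneg_and_pos_of_fibRec_of_abs_le ht hB m, by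
      simpa using not_nonneg_and_pos_of_fibRec_of_abs_le (t := -t)
        (fun m => by simp only [Pi.neg_apply, ht]; ring) (by simpa using hB) m⟩
  by_contra h
  -- From a nonzero term on, the signs alternate strictly, so `|t|` strictly decreases.
  have hnz : ∀ k, t (m₀ + k) ≠ 0 := by
    intro k
    induction k with
    | zero => exact h
    | succ k ih =>
      have hs := hsign (m₀ + k + 1)
      rw [ht (m₀ + k)] at hs
      show t (m₀ + k + 1) ≠ 0
      omega
  have hdec : ∀ k, (t (m₀ + (k + 1))).natAbs < (t (m₀ + k)).natAbs := by
    intro k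
    have hs₀ := hsign (m₀ + k)
    have hs₁ := hsign (m₀ + k + 1)
    have h₁ : t (m₀ + k + 1) ≠ 0 := hnz (k + 1)
    have h₂ : t (m₀ + k + 2) ≠ 0 := hnz (k + 2)
    rw [ht (m₀ + k)] at hs₁ h₂
    show (t (m₀ + k + 1)).natAbs < _
    omega
  exact not_strictAnti_of_wellFoundedLT _
    (strictAnti_nat_of_succ_lt (f := fun k => (t (m₀ + k)).natAbs) hdec)

end FibRecurrence

/-- The infinite Fibonacci word is not ultimately periodic. -/
theorem fibWord_not_ultimately_periodic :
    ¬ ∃ p : ℕ, 1 ≤ p ∧ ∃ n : ℕ, ∀ i ≥ n, fibWord i = fibWord (i + p) := by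
  rintro ⟨p, hp, n, hper⟩
  obtain ⟨c, B, hB⟩ := exists_abs_mul_sum_range_sub_le
    (a := fun i => if fibWord i = 0 then 1 else 0) hp fun i hi => by rw [hper i hi]
  set t : ℕ → ℤ := fun m => p * Nat.fib (m + 1) - c * Nat.fib (m + 2)
  have ht : ∀ m, t (m + 2) = t m + t (m + 1) := by
    intro m
    simp only [t, Nat.fib_add_two (n := m + 1), Nat.fib_add_two (n := m + 2)]
    push_cast; ring
  have htB : ∀ m, |t m| ≤ B := fun m => by
    simpa only [sum_range_fib_indicator_fibWord_zero] using hB (Nat.fib (m + 2))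
  have h0 : (p : ℤ) - c = 0 := by simpa [t] using eq_zero_of_fibRec_of_abs_le ht htB 0
  have h1 : (p : ℤ) - c * 2 = 0 := by
    simpa [t, Nat.fib_add_two] using eq_zero_of_fibRec_of_abs_le ht htB 1
  omega
end

section
/- Every square occurring as a factor of the infinite Fibonacci word f has order F_n for some n ≥ 2, and conversely for every n ≥ 2 the word f contains a square of order F_n. Equivalently: for n ≥ 1 there exists an index i with f[i+t] = f[i+n+t] for all 0 ≤ t < n if and only if n = F_m for some m ≥ 2. -/
abbrev W (k : ℕ) : List ℕ := fibPhi^[k] [0]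

lemma fibWord_def' (i : ℕ) : fibWord i = (W (i+2)).getD i 0 := rfl

lemma phi_append (a b : List ℕ) : fibPhi (a ++ b) = fibPhi a ++ fibPhi b := by
  simp [fibPhi]

lemma W_succ (k : ℕ) : W (k+1) = fibPhi (W k) := Function.iterate_succ_apply' _ _ _

lemma W_zero : W 0 = [0] := rfl
lemma W_one : W 1 = [0, 1] := by decide

lemma W_rec (k : ℕ) : W (k+2) = W (k+1) ++ W k := by
  induction k with
  | zero => decide
  | succ k ih =>
      calc W (k+3) = fibPhi (W (k+2)) := W_succ _
      _ = fibPhi (W (k+1)) ++ fibPhi (W k) := by rw [ih, phi_append]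
      _ = W (k+2) ++ W (k+1) := by rw [← W_succ, ← W_succ]

lemma W_len (k : ℕ) : (W k).length = Nat.fib (k+2) := by
  induction k using Nat.twoStepInduction with
  | zero => decide
  | one => decide
  | more k ih1 ih2 =>
      rw [W_rec, List.length_append, ih1, ih2]
      have e : k+1+2 = k+2+1 := by omega
      rw [e]
      have := Nat.fib_add_two (n := k+2)
      omega

lemma lt_fib_add3 (n : ℕ) : n < Nat.fib (n+3) := by
  induction n with
  | zero => decide
  | succ n ih =>
      have h1 : 0 < Nat.fib (n+2) := Nat.fib_pos.mpr (by omega)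
      have h2 := Nat.fib_add_two (n := n+2)
      have e : n+1+3 = n+2+2 := by omega
      have e2 : n+2+1 = n+3 := by omega
      rw [e, h2, e2]
      omega

lemma W_prefix_succ (k : ℕ) : W k <+: W (k+1) := by
  cases k with
  | zero => exact ⟨[1], rfl⟩
  | succ k => rw [W_rec]; exact List.prefix_append _ _

lemma W_prefix {j k : ℕ} (h : j ≤ k) : W j <+: W k := by
  induction k with
  | zero => simp_all
  | succ k ih =>
      rcases Nat.lt_or_ge j (k+1) with h' | h'
      · exact (ih (by omega)).trans (W_prefix_succ k)
      · have : j = k+1 := by omega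
        subst this; rfl

lemma getD_of_prefix {u v : List ℕ} (h : u <+: v) {i : ℕ} (hi : i < u.length) :
    v.getD i 0 = u.getD i 0 := by
  obtain ⟨t, rfl⟩ := h
  rw [List.getD_append _ _ _ _ hi]

lemma f_eq_W {k i : ℕ} (hi : i < Nat.fib (k+2)) : fibWord i = (W k).getD i 0 := by
  rw [fibWord_def']
  rcases Nat.le_total k (i+2) with h | h
  · exact getD_of_prefix (W_prefix h) (by rw [W_len]; exact hi)
  · refine (getD_of_prefix (W_prefix h) ?_).symm
    rw [W_len]
    calc i < Nat.fib (i+3) := lt_fib_add3 i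
    _ ≤ Nat.fib (i+2+2) := Nat.fib_mono (by omega)

lemma mem_W {k : ℕ} {x : ℕ} (h : x ∈ W k) : x = 0 ∨ x = 1 := by
  induction k generalizing x with
  | zero => simp [W_zero] at h; omega
  | succ k ih =>
      rw [W_succ] at h
      simp only [fibPhi, List.mem_flatten, List.mem_map] at h
      obtain ⟨l, ⟨c, _, rfl⟩, hx⟩ := h
      by_cases hc : c = 0 <;> simp [hc] at hx <;> omega

lemma f_01 (i : ℕ) : fibWord i = 0 ∨ fibWord i = 1 := by
  have hi : i < Nat.fib (i+2+2) := lt_of_lt_of_le (lt_fib_add3 i) (Nat.fib_mono (by omega))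
  rw [f_eq_W hi]
  have hlen : i < (W (i+2)).length := by rw [W_len]; exact hi
  rw [List.getD_eq_getElem _ _ hlen]
  exact mem_W (List.getElem_mem hlen)

/-! ### Synchronization: block structure of the Fibonacci word -/

def SL (u : List ℕ) (p : ℕ) : ℕ := ((u.take p).map (fun c => if c = 0 then 2 else 1)).sum

lemma SL_zero (u : List ℕ) : SL u 0 = 0 := by simp [SL]

lemma SL_cons_succ (c : ℕ) (u : List ℕ) (p : ℕ) :
    SL (c :: u) (p+1) = (if c = 0 then 2 else 1) + SL u p := by
  simp [SL]

lemma phi_cons (c : ℕ) (u : List ℕ) :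
    fibPhi (c :: u) = (if c = 0 then [0,1] else [0]) ++ fibPhi u := by
  simp [fibPhi]

lemma phi_getD_zero (u : List ℕ) : (fibPhi u).getD 0 0 = 0 := by
  cases u with
  | nil => rfl
  | cons c u => rw [phi_cons]; by_cases hc : c = 0 <;> simp [hc]

lemma SL_succ (u : List ℕ) (p : ℕ) (h : p < u.length) :
    SL u (p+1) = SL u p + (if u.getD p 0 = 0 then 2 else 1) := by
  induction u generalizing p with
  | nil => simp at h
  | cons c u ih =>
      cases p with
      | zero => simp [SL_cons_succ, SL_zero]
      | succ p =>
          rw [SL_cons_succ, SL_cons_succ, ih p (by simpa using h)]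
          simp [Nat.add_assoc]

lemma SL_len (u : List ℕ) : (fibPhi u).length = SL u u.length := by
  induction u with
  | nil => rfl
  | cons c u ih =>
      rw [phi_cons, List.length_append, ih, show (c::u).length = u.length + 1 from rfl,
        SL_cons_succ]
      by_cases hc : c = 0 <;> simp [hc, SL, Nat.add_comm]

lemma key_sync (u : List ℕ) : ∀ p, p < u.length →
    (fibPhi u).getD (SL u p) 0 = 0 ∧
      ((fibPhi u).getD (SL u p + 1) 0 = 1 ↔ u.getD p 0 = 0) := by
  induction u with
  | nil => intro p h; simp at h
  | cons c u ih =>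
      intro p hp
      cases p with
      | zero =>
          rw [SL_zero, phi_cons]
          by_cases hc : c = 0
          · simp [hc]
          · simp only [hc, if_false]
            constructor
            · rfl
            · rw [show (0:ℕ)+1 = 1 from rfl]
              have e : ([0] ++ fibPhi u).getD 1 0 = (fibPhi u).getD 0 0 := by
                cases h : fibPhi u <;> simp [h]
              rw [e, phi_getD_zero]
              simp [hc]
      | succ p =>
          have hp' : p < u.length := by simpa using hp
          have h2 := ih p hp'
          rw [phi_cons, SL_cons_succ]
          by_cases hc : c = 0 <;>
            simp only [hc, if_true, if_false] <;>
            constructor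
          · rw [show 2 + SL u p = ([0,1] : List ℕ).length + SL u p from rfl,
              List.getD_append_right _ _ _ _ (by omega)]
            simpa using h2.1
          · rw [show 2 + SL u p + 1 = ([0,1] : List ℕ).length + (SL u p + 1) from rfl,
              List.getD_append_right _ _ _ _ (by omega)]
            simpa [Nat.add_sub_cancel_left] using h2.2
          · rw [show 1 + SL u p = ([0] : List ℕ).length + SL u p from rfl,
              List.getD_append_right _ _ _ _ (by omega)]
            simpa using h2.1
          · rw [show 1 + SL u p + 1 = ([0] : List ℕ).length + (SL u p + 1) from rfl,
              List.getD_append_right _ _ _ _ (by omega)]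
            simpa [Nat.add_sub_cancel_left] using h2.2

def Sf : ℕ → ℕ
  | 0 => 0
  | p+1 => Sf p + (if fibWord p = 0 then 2 else 1)

lemma Sf_succ (p : ℕ) : Sf (p+1) = Sf p + (if fibWord p = 0 then 2 else 1) := rfl

lemma Sf_eq_SL {k : ℕ} : ∀ {p : ℕ}, p ≤ (W k).length → Sf p = SL (W k) p
  | 0, _ => by rw [SL_zero]; rfl
  | p+1, h => by
      have hp : p < (W k).length := by omega
      rw [Sf_succ, SL_succ _ _ hp, Sf_eq_SL (le_of_lt hp),
        f_eq_W (k := k) (by rw [← W_len]; exact hp)]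

lemma SL_mono (u : List ℕ) {p q : ℕ} (h : p ≤ q) (hq : q ≤ u.length) :
    SL u p + (q - p) ≤ SL u q := by
  induction q with
  | zero =>
      have hp0 : p = 0 := by omega
      subst hp0
      omega
  | succ q ih =>
      rcases Nat.lt_or_ge p (q+1) with h' | h'
      · have := ih (by omega) (by omega)
        rw [SL_succ _ _ (by omega)]
        have : (if u.getD q 0 = 0 then 2 else 1) ≥ 1 := by split <;> omega
        omega
      · have : p = q+1 := by omega
        subst this; omega

/-- `f (Sf p) = 0` : every block starts with 0. -/
lemma S2 (p : ℕ) : fibWord (Sf p) = 0 := by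
  set k := p + 2 with hk
  have hlen : p + 1 < (W k).length := by
    rw [W_len]; exact lt_fib_add3 (p+1)
  have hkey := key_sync (W k) p (by omega)
  have htr : Sf p = SL (W k) p := Sf_eq_SL (by omega)
  have hbound : Sf p < Nat.fib (k+1+2) := by
    rw [← W_len, W_succ, SL_len]
    have := SL_mono (W k) (p := p) (q := (W k).length) (by omega) (le_refl _)
    omega
  rw [f_eq_W hbound, W_succ k, htr]
  exact hkey.1

/-- `f (Sf p + 1) = 1 ↔ f p = 0` : a block is `01` iff its parent letter is 0. -/
lemma S3 (p : ℕ) : fibWord (Sf p + 1) = 1 ↔ fibWord p = 0 := by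
  set k := p + 2 with hk
  have hlen : p + 1 < (W k).length := by
    rw [W_len]; exact lt_fib_add3 (p+1)
  have hkey := key_sync (W k) p (by omega)
  have htr : Sf p = SL (W k) p := Sf_eq_SL (by omega)
  have hbound : Sf p + 1 < Nat.fib (k+1+2) := by
    rw [← W_len, W_succ, SL_len]
    have := SL_mono (W k) (p := p+2) (q := (W k).length) (by omega) (le_refl _)
    have h2 := SL_succ (W k) p (by omega)
    have h3 := SL_succ (W k) (p+1) (by omega)
    rw [show p+1+1 = p+2 from rfl] at h3
    have : (if (W k).getD p 0 = 0 then 2 else 1) ≥ 1 := by split <;> omega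
    have : (if (W k).getD (p+1) 0 = 0 then 2 else 1) ≥ 1 := by split <;> omega
    omega
  rw [f_eq_W hbound, W_succ k, htr,
    f_eq_W (k := k) (i := p) (by rw [← W_len]; omega)]
  exact hkey.2

lemma Sf_zero : Sf 0 = 0 := rfl

lemma Sf_step1 (p : ℕ) : Sf p + 1 ≤ Sf (p+1) := by rw [Sf_succ]; split <;> omega
lemma Sf_step2 (p : ℕ) : Sf (p+1) ≤ Sf p + 2 := by rw [Sf_succ]; split <;> omega

lemma Sf_add_ge (p d : ℕ) : Sf p + d ≤ Sf (p+d) := by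
  induction d with
  | zero => simp
  | succ d ih =>
      have h1 := Sf_step1 (p+d)
      have e : p + (d+1) = (p+d)+1 := by omega
      rw [e]
      omega

lemma Sf_add_le (p d : ℕ) : Sf (p+d) ≤ Sf p + 2*d := by
  induction d with
  | zero => simp
  | succ d ih =>
      have h1 := Sf_step2 (p+d)
      have e : p + (d+1) = (p+d)+1 := by omega
      rw [e]
      omega

lemma Sf_mono {p q : ℕ} (h : p ≤ q) : Sf p ≤ Sf q := by
  have h1 := Sf_add_ge p (q - p)
  have e : p + (q-p) = q := by omega
  rw [e] at h1
  omega

lemma Sf_strict_mono {p q : ℕ} (h : p < q) : Sf p < Sf q := by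
  have h1 := Sf_add_ge p (q - p)
  have e : p + (q-p) = q := by omega
  rw [e] at h1
  omega

lemma Sf_lt_reflect {p q : ℕ} (h : Sf p < Sf q) : p < q := by
  by_contra h'
  have := Sf_mono (le_of_not_gt h')
  omega

lemma Sf_inj {p q : ℕ} (h : Sf p = Sf q) : p = q := by
  rcases Nat.lt_trichotomy p q with h' | h' | h'
  · have := Sf_strict_mono h'; omega
  · exact h'
  · have := Sf_strict_mono h'; omega

lemma Sf_ge_self (p : ℕ) : p ≤ Sf p := by
  have := Sf_add_ge 0 p
  simpa [Sf_zero] using this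

lemma cover (j : ℕ) : ∃ p, j = Sf p ∨ (j = Sf p + 1 ∧ fibWord p = 0) := by
  induction j with
  | zero => exact ⟨0, Or.inl rfl⟩
  | succ j ih =>
      obtain ⟨p, hp | ⟨hp, hfp⟩⟩ := ih
      · rcases f_01 p with h0 | h1
        · exact ⟨p, Or.inr ⟨by omega, h0⟩⟩
        · refine ⟨p+1, Or.inl ?_⟩
          rw [Sf_succ, h1]
          simp; omega
      · refine ⟨p+1, Or.inl ?_⟩
        rw [Sf_succ, hfp]
        simp; omega

lemma S4 {j : ℕ} (h : fibWord j = 0) : ∃ p, j = Sf p := by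
  obtain ⟨p, hp | ⟨hp, hfp⟩⟩ := cover j
  · exact ⟨p, hp⟩
  · rw [hp, (S3 p).mpr hfp] at h; omega

lemma A1 {j : ℕ} (h : fibWord j = 1) : fibWord (j+1) = 0 := by
  obtain ⟨p, hp | ⟨hp, hfp⟩⟩ := cover j
  · rw [hp, S2] at h; omega
  · have : j + 1 = Sf (p+1) := by rw [Sf_succ, hfp]; simp; omega
    rw [this, S2]

lemma A2 {j : ℕ} (h : fibWord (j+1) = 1) : fibWord j = 0 := by
  obtain ⟨p, hp | ⟨hp, hfp⟩⟩ := cover (j+1)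
  · rw [hp, S2] at h; omega
  · have : j = Sf p := by omega
    rw [this, S2]

lemma F0 : fibWord 0 = 0 := rfl
lemma F1 : fibWord 1 = 1 := by decide

lemma f_ne_zero {j : ℕ} (h : fibWord j ≠ 0) : fibWord j = 1 := by
  rcases f_01 j with h' | h' <;> [exact absurd h' h; exact h']

lemma S3' {p : ℕ} (h : fibWord p = 1) : fibWord (Sf p + 1) = 0 := by
  rcases f_01 (Sf p + 1) with h' | h'
  · exact h'
  · rw [(S3 p).mp h'] at h; omega

lemma S3'' {p : ℕ} (h : fibWord (Sf p + 1) = 0) : fibWord p = 1 := by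
  rcases f_01 p with h' | h'
  · rw [(S3 p).mpr h'] at h; omega
  · exact h'

lemma A3 {j : ℕ} (h0 : fibWord j = 0) (h1 : fibWord (j+1) = 0) : fibWord (j+2) = 1 := by
  obtain ⟨p, rfl⟩ := S4 h0
  have hfp : fibWord p = 1 := S3'' h1
  have hstep : Sf (p+1) = Sf p + 1 := by rw [Sf_succ, hfp]; simp
  have : fibWord (Sf (p+1) + 1) = 1 := (S3 (p+1)).mpr (A1 hfp)
  rw [hstep] at this
  exact this

lemma A4 {j : ℕ} (h0 : fibWord j = 0) (h1 : fibWord (j+1) = 0) :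
    ∃ j₀, j = j₀ + 1 ∧ fibWord j₀ = 1 := by
  cases j with
  | zero => rw [F1] at h1; omega
  | succ j₀ =>
      refine ⟨j₀, rfl, ?_⟩
      rcases f_01 j₀ with h' | h'
      · have := A3 h' h0
        rw [show j₀+2 = j₀+1+1 from rfl] at this
        omega
      · exact h'

lemma BL2 {p : ℕ} : Sf (p+1) = Sf p + 2 ↔ fibWord p = 0 := by
  rw [Sf_succ]; split <;> simp_all

lemma BL1 {p : ℕ} : Sf (p+1) = Sf p + 1 ↔ fibWord p = 1 := by
  rw [Sf_succ]
  constructor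
  · intro h; split at h <;> [omega; exact f_ne_zero (by assumption)]
  · intro h; rw [h]; simp

lemma Sf_eq_add_one {s r : ℕ} (h : Sf s = Sf r + 1) : s = r + 1 ∧ fibWord r = 1 := by
  have hr : r < s := Sf_lt_reflect (by omega)
  have hle : s ≤ r + 1 := by
    by_contra h'
    have := Sf_add_ge r 2
    have := Sf_mono (show r + 2 ≤ s by omega)
    omega
  have hs : s = r + 1 := by omega
  subst hs
  exact ⟨rfl, BL1.mp h⟩

lemma Sf_eq_add_two {s r : ℕ} (h : Sf s = Sf r + 2) : s = r + 1 ∧ fibWord r = 0 := by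
  have hr : r < s := Sf_lt_reflect (by omega)
  have hle : s ≤ r + 2 := by
    by_contra h'
    have := Sf_add_ge r 3
    have := Sf_mono (show r + 3 ≤ s by omega)
    omega
  rcases (show s = r + 1 ∨ s = r + 2 by omega) with hs | hs
  · subst hs
    exact ⟨rfl, BL2.mp h⟩
  · subst hs
    exfalso
    have h1 := Sf_step1 r
    have h2 := Sf_step2 r
    have h3 := Sf_step1 (r+1)
    have h4 := Sf_step2 (r+1)
    have er : r+1+1 = r+2 := rfl
    rw [er] at h3 h4
    have e1 : Sf (r+1) = Sf r + 1 := by omega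
    have e2 : Sf (r+2) = Sf (r+1) + 1 := by omega
    have hh1 := A1 (BL1.mp e1)
    have hh2 := BL1.mp (show Sf (r+1+1) = Sf (r+1) + 1 by rw [er]; exact e2)
    omega

/-- every 0-position in `[Sf p, Sf q)` is `Sf r` with `p ≤ r < q`. -/
lemma Sf_surj_range {p q x : ℕ} (h1 : Sf p ≤ x) (h2 : x < Sf q) (h0 : fibWord x = 0) :
    ∃ r, p ≤ r ∧ r < q ∧ x = Sf r := by
  obtain ⟨r, rfl⟩ := S4 h0
  exact ⟨r, le_of_not_gt (fun hc => by have := Sf_strict_mono hc; omega),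
    Sf_lt_reflect h2, rfl⟩

/-! ### Finite factors, conjugacy, tiling -/

def xW (j ℓ : ℕ) : List ℕ := (List.range ℓ).map (fun t => fibWord (j + t))

lemma xW_length (j ℓ : ℕ) : (xW j ℓ).length = ℓ := by simp [xW]

lemma xW_append (j a b : ℕ) : xW j (a+b) = xW j a ++ xW (j+a) b := by
  simp only [xW, List.range_add, List.map_append, List.map_map]
  congr 1
  apply List.map_congr_left
  intro t _
  simp [Nat.add_assoc, Nat.add_comm a t]

lemma xW_one (j : ℕ) : xW j 1 = [fibWord j] := by
  simp [xW, List.range_succ]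

lemma xW_two (j : ℕ) : xW j 2 = [fibWord j, fibWord (j+1)] := by
  simp [xW, List.range_succ]

def Conj (x y : List ℕ) : Prop := ∃ u v, x = u ++ v ∧ y = v ++ u

lemma Conj.refl (x : List ℕ) : Conj x x := ⟨x, [], by simp, by simp⟩

lemma Conj.length {x y : List ℕ} (h : Conj x y) : x.length = y.length := by
  obtain ⟨u, v, rfl, rfl⟩ := h
  simp [Nat.add_comm]

lemma Conj.trans {x y z : List ℕ} (h1 : Conj x y) (h2 : Conj y z) : Conj x z := by
  obtain ⟨u, v, rfl, rfl⟩ := h1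
  obtain ⟨a, b, hy, rfl⟩ := h2
  rcases List.append_eq_append_iff.mp hy with ⟨c, hc1, hc2⟩ | ⟨c, hc1, hc2⟩
  · subst hc1; subst hc2
    exact ⟨c, b ++ v, by simp, by simp⟩
  · subst hc1; subst hc2
    exact ⟨u ++ a, c, by simp, by simp⟩

lemma Conj.phi {x y : List ℕ} (h : Conj x y) : Conj (fibPhi x) (fibPhi y) := by
  obtain ⟨u, v, rfl, rfl⟩ := h
  exact ⟨fibPhi u, fibPhi v, phi_append u v, phi_append v u⟩

/-- The image of a parent factor under φ tiles the child word between block starts. -/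
lemma tile (p : ℕ) : ∀ m, xW (Sf p) (Sf (p+m) - Sf p) = fibPhi (xW p m) := by
  intro m
  induction m with
  | zero => simp [xW, fibPhi]
  | succ m ih =>
      have hmono : Sf p ≤ Sf (p+m) := Sf_mono (by omega)
      have hstep : Sf (p+(m+1)) = Sf (p+m) + (if fibWord (p+m) = 0 then 2 else 1) := by
        rw [show p+(m+1) = (p+m)+1 from rfl, Sf_succ]
      have hblock : xW (Sf (p+m)) (if fibWord (p+m) = 0 then 2 else 1) =
          (if fibWord (p+m) = 0 then [0,1] else [0]) := by
        by_cases hc : fibWord (p+m) = 0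
        · rw [if_pos hc, if_pos hc, xW_two, S2, (S3 (p+m)).mpr hc]
        · rw [if_neg hc, if_neg hc, xW_one, S2]
      have e1 : Sf (p+(m+1)) - Sf p =
          (Sf (p+m) - Sf p) + (if fibWord (p+m) = 0 then 2 else 1) := by
        rw [hstep]; omega
      rw [e1, xW_append, ih]
      have e2 : Sf p + (Sf (p+m) - Sf p) = Sf (p+m) := by omega
      rw [e2, hblock]
      have e3 : xW p (m+1) = xW p m ++ [fibWord (p+m)] := by
        rw [xW_append p m 1, xW_one]
      rw [e3, phi_append]
      congr 1
      simp [fibPhi]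

/-! ### Correspondence: matching windows have matching parents -/

lemma letter_eq {a n L r s : ℕ} (har : a ≤ Sf r) (hJ : Sf s = Sf r + n)
    (hg : Sf r + 1 < a + L)
    (hmatch : ∀ u, u < L → fibWord (a+u) = fibWord (a+n+u)) :
    fibWord r = fibWord s := by
  have h := hmatch (Sf r + 1 - a) (by omega)
  have e1 : a + (Sf r + 1 - a) = Sf r + 1 := by omega
  have e2 : a + n + (Sf r + 1 - a) = Sf s + 1 := by omega
  rw [e1, e2] at h
  rcases f_01 r with h0 | h1
  · rw [h0, ((S3 s).mp (h ▸ (S3 r).mpr h0)).symm]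
  · rw [h1, (S3'' (h ▸ S3' h1)).symm]

lemma corr {a n L p q : ℕ} (hp : Sf p = a) (hq : Sf q = a + n)
    (hmatch : ∀ u, u < L → fibWord (a+u) = fibWord (a+n+u)) :
    ∀ t, (∀ t', t' < t → Sf (p+t') + 1 < a + L) → Sf (q+t) = Sf (p+t) + n := by
  intro t
  induction t with
  | zero => simp only [Nat.add_zero]; omega
  | succ t ih =>
      intro hg
      have hJ : Sf (q+t) = Sf (p+t) + n := ih (fun t' ht' => hg t' (by omega))
      have hgt : Sf (p+t) + 1 < a + L := hg t (by omega)
      have hml : fibWord (p+t) = fibWord (q+t) :=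
        letter_eq (hp ▸ Sf_mono (by omega)) hJ hgt hmatch
      rw [show p+(t+1) = (p+t)+1 from rfl, show q+(t+1) = (q+t)+1 from rfl,
        Sf_succ, Sf_succ, hml, hJ]
      split <;> omega

/-! ### Clean desubstitution of an extended square -/

lemma clean {i n : ℕ} (hn : 2 ≤ n)
    (hsq : ∀ t, t ≤ n → fibWord (i+t) = fibWord (i+n+t))
    (hf0 : fibWord i = 0) :
    ∃ p m, 1 ≤ m ∧ m < n ∧ (∀ t, t < m → fibWord (p+t) = fibWord (p+m+t)) ∧
      xW i n = fibPhi (xW p m) := by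
  obtain ⟨p, hp⟩ := S4 hf0
  have hin : fibWord (i+n) = 0 := by
    have := hsq 0 (by omega)
    simpa using this.symm.trans hf0
  obtain ⟨q, hq⟩ := S4 hin
  have hpq : p < q := Sf_lt_reflect (by omega)
  set m := q - p with hm
  have hqm : q = p + m := by omega
  have hm1 : 1 ≤ m := by omega
  -- the correspondence, with matching length L = n+1
  have hmatch : ∀ u, u < n + 1 → fibWord (i+u) = fibWord (i+n+u) := by
    intro u hu; exact hsq u (by omega)
  have hguard : ∀ t', t' < m → Sf (p+t') + 1 < i + (n+1) := by
    intro t' ht'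
    have : Sf (p+t') < Sf q := Sf_strict_mono (by omega)
    omega
  have hJ : ∀ t, t ≤ m → Sf (q+t) = Sf (p+t) + n := by
    intro t ht
    exact corr hp.symm (by omega) hmatch t (fun t' ht' => hguard t' (by omega))
  have hletters : ∀ t, t < m → fibWord (p+t) = fibWord (p+m+t) := by
    intro t ht
    have := letter_eq (a := i) (L := n+1) (hp ▸ Sf_mono (by omega) : i ≤ Sf (p+t))
      (hJ t (by omega)) (hguard t ht) hmatch
    rwa [hqm] at this
  -- m < n
  have hmn : m < n := by
    rcases Nat.lt_or_ge m 2 with h2 | h2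
    · omega
    · -- among f p, f (p+1) one is 0, so some block has length 2
      have hs1 := Sf_step1 p
      have hs2 := Sf_step2 p
      have hs3 := Sf_step1 (p+1)
      have hs4 := Sf_step2 (p+1)
      have h3 : Sf p + 3 ≤ Sf (p+2) := by
        rcases f_01 p with h0 | h1
        · have := BL2.mpr h0
          rw [show p+2 = (p+1)+1 from rfl]
          omega
        · have := BL2.mpr (A1 h1)
          rw [show p+2 = (p+1)+1 from rfl] at *
          omega
      have h4 := Sf_add_ge (p+2) (m-2)
      have e : p + 2 + (m-2) = p + m := by omega
      rw [e] at h4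
      have : Sf (p+m) = Sf q := by rw [hqm]
      omega
  refine ⟨p, m, hm1, hmn, hletters, ?_⟩
  have := tile p m
  rw [← hqm] at this
  rw [← hq, ← hp] at this
  have e : i + n - i = n := by omega
  rw [e] at this
  exact this

/-! ### Shifting a square occurrence one step to the left -/

lemma shift_left {i n : ℕ} (hn : 1 ≤ n)
    (hsq : ∀ t, t < n → fibWord (i+1+t) = fibWord (i+1+n+t))
    (h0 : fibWord i = 0) (hend : fibWord (i+n) = 0) :
    (∀ t, t < n → fibWord (i+t) = fibWord (i+n+t)) ∧
      Conj (xW (i+1) n) (xW i n) := by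
  constructor
  · intro t ht
    cases t with
    | zero => simpa using h0.trans hend.symm
    | succ t =>
        have := hsq t (by omega)
        have e1 : i + (t+1) = i+1+t := by omega
        have e2 : i + n + (t+1) = i+1+n+t := by omega
        rw [e1, e2]
        exact this
  · refine ⟨xW (i+1) (n-1), [fibWord (i+n)], ?_, ?_⟩
    · have e : n = (n-1) + 1 := by omega
      rw [e, xW_append, xW_one]
      have e2 : i + 1 + (n-1) = i + n := by omega
      rw [e2, ← e]
    · have e : n = 1 + (n-1) := by omega
      rw [hend, e, xW_append, xW_one, h0]
      have e2 : i + 1 = i + 1 := rfl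
      norm_num

/-! ### Elimination of the bad configurations -/

lemma eelim {j m : ℕ} (hm : 3 ≤ m)
    (hsq : ∀ t, t < m-1 → fibWord (j+t) = fibWord (j+m+t))
    (hend1 : fibWord (j+m-1) = 1) (hend2 : fibWord (j+2*m-1) = 0)
    (h0 : fibWord j = 0) (hctx : j = 0 ∨ fibWord (j-1) = 0) : False := by
  have ha : fibWord (j+m-2) = 0 := A2 (by rw [show j+m-2+1 = j+m-1 by omega]; exact hend1)
  have hb : fibWord (j+m) = 0 := by
    have := hsq 0 (by omega); simpa using this.symm.trans h0
  obtain ⟨r, hr⟩ := S4 h0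
  obtain ⟨s, hs⟩ := S4 hb
  have hrs : r < s := Sf_lt_reflect (by omega)
  set m' := s - r with hm'
  have hsm : s = r + m' := by omega
  -- f r = 0 via the left context
  have hfr : fibWord r = 0 := by
    rcases hctx with hj0 | hctx
    · have : r = 0 := Sf_inj (by rw [Sf_zero]; omega)
      rw [this]; exact F0
    · rcases Nat.eq_zero_or_pos j with hj0 | hjpos
      · have : r = 0 := Sf_inj (by rw [Sf_zero]; omega)
        rw [this]; exact F0
      · have hj1 : fibWord (j-1) = 0 := hctx
        obtain ⟨r₁, hr₁⟩ := S4 hj1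
        have : Sf r = Sf r₁ + 1 := by omega
        obtain ⟨hre, hfr₁⟩ := Sf_eq_add_one this
        rw [hre]; exact A1 hfr₁
  -- m' ≥ 2
  have hm'2 : 2 ≤ m' := by
    have := Sf_add_le r m'
    rw [← hsm] at this
    omega
  -- identify the last block start of the first copy
  have hlast : Sf (r + (m'-1)) = j+m-2 ∧ fibWord (r + (m'-1)) = 0 := by
    obtain ⟨r₂, hr₂1, hr₂2, hr₂3⟩ := Sf_surj_range (p := r) (q := s)
      (by omega) (by omega) ha
    obtain ⟨hse, hfr₂⟩ := Sf_eq_add_two (s := s) (r := r₂) (by omega)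
    have : r₂ = r + (m'-1) := by omega
    rw [← this]
    exact ⟨by omega, hfr₂⟩
  -- correspondence with matching length L = m-1
  have hmatch : ∀ u, u < m-1 → fibWord (j+u) = fibWord (j+m+u) := hsq
  have hguard : ∀ t', t' < m'-1 → Sf (r+t') + 1 < j + (m-1) := by
    intro t' ht'
    have : Sf (r+t') < Sf (r+(m'-1)) := Sf_strict_mono (by omega)
    omega
  have hJ : Sf (s+(m'-1)) = Sf (r+(m'-1)) + m :=
    corr (a := j) (n := m) (L := m-1) hr.symm (by omega) hmatch (m'-1) hguard
  have hletters : ∀ t, t < m'-1 → fibWord (r+t) = fibWord (s+t) := by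
    intro t ht
    exact letter_eq (a := j) (L := m-1) (by rw [hr]; exact Sf_mono (by omega))
      (corr (a := j) (n := m) (L := m-1) hr.symm (by omega) hmatch t
        (fun t' ht' => hguard t' (by omega)))
      (hguard t ht) hmatch
  -- f (s + (m'-1)) = 1
  have hkey : fibWord (s+(m'-1)) = 1 := by
    apply S3''
    rw [hJ, hlast.1]
    rw [show j+m-2+m+1 = j+2*m-1 by omega]
    exact hend2
  -- the contradiction: 000 in the parent
  have hx1 : fibWord (s+(m'-2)) = 0 := by
    have := A2 (j := s+(m'-2)) ?_
    · exact this
    · rw [show s+(m'-2)+1 = s+(m'-1) by omega]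
      exact hkey
  have hx2 : fibWord (r+(m'-2)) = 0 := (hletters (m'-2) (by omega)).trans hx1
  have hx3 : fibWord (r+(m'-1)) = 0 := hlast.2
  have hx4 : fibWord s = 0 := (hletters 0 (by omega)).symm.trans (by simpa using hfr)
  have := A3 hx2 (by rw [show r+(m'-2)+1 = r+(m'-1) by omega]; exact hx3)
  rw [show r+(m'-2)+2 = s by omega] at this
  omega

lemma nobad {i n : ℕ} (hn : 4 ≤ n)
    (hsq : ∀ t, t < n → fibWord (i+t) = fibWord (i+n+t))
    (h0 : fibWord i = 0) (h2n : fibWord (i+2*n) = 1)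
    (hctx : i = 0 ∨ fibWord (i-1) = 1) : False := by
  have hin : fibWord (i+n) = 0 := by
    have := hsq 0 (by omega); simpa using this.symm.trans h0
  have h1 : fibWord (i+2*n-1) = 0 := A2 (by rw [show i+2*n-1+1 = i+2*n by omega]; exact h2n)
  have h2 : fibWord (i+n-1) = 0 := by
    have := hsq (n-1) (by omega)
    rw [show i+(n-1) = i+n-1 by omega, show i+n+(n-1) = i+2*n-1 by omega] at this
    exact this.trans h1
  have h3 : fibWord (i+n+1) = 1 := by
    have := A3 h2 (by rw [show i+n-1+1 = i+n by omega]; exact hin)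
    rwa [show i+n-1+2 = i+n+1 by omega] at this
  have h4 : fibWord (i+1) = 1 := by
    have := hsq 1 (by omega); rw [this]; exact h3
  obtain ⟨p, hp⟩ := S4 h0
  obtain ⟨q, hq⟩ := S4 hin
  have hpq : p < q := Sf_lt_reflect (by omega)
  set m := q - p with hm
  have hqm : q = p + m := by omega
  have hfp : fibWord p = 0 := (S3 p).mp (by rw [← hp]; exact h4)
  -- parent-level left context
  have hctx' : p = 0 ∨ fibWord (p-1) = 0 := by
    rcases hctx with hi0 | hi1
    · exact Or.inl (Sf_inj (by rw [Sf_zero]; omega))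
    · rcases Nat.eq_zero_or_pos i with hi0 | hipos
      · exact Or.inl (Sf_inj (by rw [Sf_zero]; omega))
      · rcases Nat.eq_zero_or_pos (i-1) with hi10 | hi1pos
        · rw [hi10, F0] at hi1; omega
        · have hi2 : fibWord (i-2) = 0 := A2 (by rw [show i-2+1 = i-1 by omega]; exact hi1)
          obtain ⟨r, hr⟩ := S4 hi2
          have hfr : fibWord r = 0 := (S3 r).mp (by rw [show Sf r + 1 = i-1 by omega]; exact hi1)
          have : Sf (r+1) = Sf r + 2 := BL2.mpr hfr
          have hpr : p = r + 1 := Sf_inj (by omega)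
          refine Or.inr ?_
          rw [show p - 1 = r by omega]
          exact hfr
  -- identify the last block start of the first copy: Sf (p+(m-1)) = i+n-1
  have hlast : Sf (p + (m-1)) = i+n-1 ∧ fibWord (p + (m-1)) = 1 := by
    obtain ⟨r₂, hr₂1, hr₂2, hr₂3⟩ := Sf_surj_range (p := p) (q := q)
      (by omega) (by omega) h2
    obtain ⟨hse, hfr₂⟩ := Sf_eq_add_one (s := q) (r := r₂) (by omega)
    have : r₂ = p + (m-1) := by omega
    rw [← this]
    exact ⟨by omega, hfr₂⟩
  -- correspondence with matching length L = n
  have hguard : ∀ t', t' < m-1 → Sf (p+t') + 1 < i + n := by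
    intro t' ht'
    have : Sf (p+t') < Sf (p+(m-1)) := Sf_strict_mono (by omega)
    omega
  have hJ : Sf (q+(m-1)) = Sf (p+(m-1)) + n :=
    corr (a := i) (n := n) (L := n) hp.symm (by omega) hsq (m-1) hguard
  have hletters : ∀ t, t < m-1 → fibWord (p+t) = fibWord (q+t) := by
    intro t ht
    exact letter_eq (a := i) (L := n) (by rw [hp]; exact Sf_mono (by omega))
      (corr (a := i) (n := n) (L := n) hp.symm (by omega) hsq t
        (fun t' ht' => hguard t' (by omega)))
      (hguard t ht) hsq
  -- f (q+(m-1)) = 0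
  have hqlast : fibWord (q+(m-1)) = 0 := by
    apply (S3 _).mp
    rw [hJ, hlast.1, show i+n-1+n+1 = i+2*n by omega]
    exact h2n
  -- m ≥ 3
  have hm3 : 3 ≤ m := by
    have hle := Sf_add_le p m
    rw [← hqm] at hle
    rcases (show m = 1 ∨ m = 2 ∨ 3 ≤ m by omega) with h | h | h
    · omega
    · exfalso
      have hs1 := Sf_step1 p
      have hs2 := Sf_step2 p
      have hs3 := Sf_step1 (p+1)
      have hs4 := Sf_step2 (p+1)
      rw [show p+1+1 = p+2 by omega] at hs3 hs4
      have hq2 : Sf (p+2) = Sf p + n := by rw [← h, ← hqm]; omega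
      have hb2 : Sf (p+1) = Sf p + 2 := BL2.mpr hfp
      have : fibWord (p+1) = 1 := by
        have := hlast.2
        rwa [show p + (m-1) = p+1 by omega] at this
      have hstep2 := BL1.mpr this
      rw [show p+1+1 = p+2 by omega] at hstep2
      omega
    · exact h
  -- E-configuration at the parent level: contradiction
  apply eelim (j := p) (m := m) hm3
  · intro t ht
    rw [show p + m + t = q + t by omega]
    exact hletters t ht
  · rw [show p+m-1 = p+(m-1) by omega]
    exact hlast.2
  · rw [show p+2*m-1 = q+(m-1) by omega]
    exact hqlast
  · exact hfp
  · exact hctx'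

lemma xW_three (j : ℕ) : xW j 3 = [fibWord j, fibWord (j+1), fibWord (j+2)] := by
  simp [xW, List.range_succ]

lemma W_two : W 2 = [0, 1, 0] := by decide

/-! ### Main claim: each half of a square is a conjugate of some `W k` -/

lemma main_claim (n : ℕ) : 1 ≤ n → ∀ i, (∀ t, t < n → fibWord (i+t) = fibWord (i+n+t)) →
    ∃ k, Conj (xW i n) (W k) := by
  induction n using Nat.strong_induction_on with
  | _ n IH =>
    intro hn i hsq
    have hin : fibWord (i+n) = fibWord i := by
      have := hsq 0 (by omega); simpa using this.symm
    rcases (show n = 1 ∨ n = 2 ∨ n = 3 ∨ 4 ≤ n by omega) with h | h | h | h4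
    · -- n = 1
      subst h
      have h0 : fibWord i = 0 := by
        rcases f_01 i with h0 | h1
        · exact h0
        · have := A1 h1
          rw [hin] at this
          omega
      exact ⟨0, by rw [xW_one, h0]; exact Conj.refl _⟩
    · -- n = 2
      subst h
      rcases f_01 i with h0 | h0
      · rcases f_01 (i+1) with h1 | h1
        · exfalso
          have := A3 h0 h1
          rw [hin] at this
          omega
        · exact ⟨1, by rw [xW_two, h0, h1, W_one]; exact Conj.refl _⟩
      · have h1 : fibWord (i+1) = 0 := A1 h0
        exact ⟨1, [fibWord i], [fibWord (i+1)], by rw [xW_two]; rfl,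
          by rw [W_one, h0, h1]; rfl⟩
    · -- n = 3
      subst h
      rcases f_01 i with h0 | h0
      · rcases f_01 (i+1) with h1 | h1
        · have h2 : fibWord (i+2) = 1 := A3 h0 h1
          exact ⟨2, [fibWord i], [fibWord (i+1), fibWord (i+2)], by rw [xW_three]; rfl,
            by rw [W_two, h0, h1, h2]; rfl⟩
        · have h2 : fibWord (i+2) = 0 := A1 h1
          exact ⟨2, by rw [xW_three, h0, h1, h2, W_two]; exact Conj.refl _⟩
      · have h1 : fibWord (i+1) = 0 := A1 h0
        have h2 : fibWord (i+2) = 0 := by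
          rcases f_01 (i+2) with h2 | h2
          · exact h2
          · exfalso
            have := A1 h2
            rw [show i+2+1 = i+3 by omega, hin] at this
            omega
        exact ⟨2, [fibWord i, fibWord (i+1)], [fibWord (i+2)], by rw [xW_three]; rfl,
          by rw [W_two, h0, h1, h2]; rfl⟩
    · -- n ≥ 4
      have main_clean : ∀ j, fibWord j = 0 →
          (∀ t, t ≤ n → fibWord (j+t) = fibWord (j+n+t)) →
          ∃ k, Conj (xW j n) (W k) := by
        intro j hj0 hsqe
        obtain ⟨p, m, hm1, hmn, hpsq, heq⟩ := clean (by omega) hsqe hj0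
        obtain ⟨k, hconj⟩ := IH m hmn hm1 p hpsq
        refine ⟨k+1, ?_⟩
        rw [heq, W_succ]
        exact hconj.phi
      by_cases h0 : fibWord i = 0
      · by_cases hE : fibWord (i+2*n) = fibWord (i+n)
        · apply main_clean i h0
          intro t ht
          rcases Nat.lt_or_ge t n with ht' | ht'
          · exact hsq t ht'
          · have ht2 : t = n := by omega
            rw [ht2, show i+n+n = i+2*n by omega]
            exact hE.symm
        · -- the bad case: roll one step left
          have h2n : fibWord (i+2*n) = 1 := by
            rcases f_01 (i+2*n) with hh | hh
            · exfalso; apply hE; rw [hh, hin, h0]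
            · exact hh
          have hctx : ¬(i = 0 ∨ fibWord (i-1) = 1) := fun hc => nobad h4 hsq h0 h2n hc
          have hipos : i ≠ 0 := fun hh => hctx (Or.inl hh)
          have hprev : fibWord (i-1) = 0 := by
            rcases f_01 (i-1) with hh | hh
            · exact hh
            · exact absurd (Or.inr hh) hctx
          obtain ⟨i₀, rfl⟩ : ∃ i₀, i = i₀+1 := ⟨i-1, by omega⟩
          have hi0 : fibWord i₀ = 0 := by simpa using hprev
          have hiend : fibWord (i₀+n) = 0 := by
            have ha := A2 (j := i₀+1+2*n-1) (by rw [show i₀+1+2*n-1+1 = i₀+1+2*n by omega]; exact h2n)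
            have hb := hsq (n-1) (by omega)
            rw [show i₀+1+(n-1) = i₀+n by omega, show i₀+1+n+(n-1) = i₀+1+2*n-1 by omega] at hb
            rw [hb]; exact ha
          obtain ⟨hsq', hconj1⟩ := shift_left (by omega) hsq hi0 hiend
          have hfree : fibWord (i₀+2*n) = fibWord (i₀+n) := by
            have := hsq (n-1) (by omega)
            rw [show i₀+1+(n-1) = i₀+n by omega, show i₀+1+n+(n-1) = i₀+2*n by omega] at this
            exact this.symm
          obtain ⟨k, hconj2⟩ := main_clean i₀ hi0 (by
            intro t ht
            rcases Nat.lt_or_ge t n with ht' | ht'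
            · exact hsq' t ht'
            · have ht2 : t = n := by omega
              rw [ht2, show i₀+n+n = i₀+2*n by omega]
              exact hfree.symm)
          exact ⟨k, hconj1.trans hconj2⟩
      · -- first letter 1: roll one step left
        have h0' : fibWord i = 1 := f_ne_zero h0
        have hipos : i ≠ 0 := by
          intro hh; rw [hh, F0] at h0'; omega
        obtain ⟨i₀, rfl⟩ : ∃ i₀, i = i₀+1 := ⟨i-1, by omega⟩
        have hi0 : fibWord i₀ = 0 := A2 h0'
        have hiend : fibWord (i₀+n) = 0 :=
          A2 (by rw [show i₀+n+1 = i₀+1+n by omega, hin]; exact h0')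
        obtain ⟨hsq', hconj1⟩ := shift_left (by omega) hsq hi0 hiend
        have hfree : fibWord (i₀+2*n) = fibWord (i₀+n) := by
          have := hsq (n-1) (by omega)
          rw [show i₀+1+(n-1) = i₀+n by omega, show i₀+1+n+(n-1) = i₀+2*n by omega] at this
          exact this.symm
        obtain ⟨k, hconj2⟩ := main_clean i₀ hi0 (by
          intro t ht
          rcases Nat.lt_or_ge t n with ht' | ht'
          · exact hsq' t ht'
          · have ht2 : t = n := by omega
            rw [ht2, show i₀+n+n = i₀+2*n by omega]
            exact hfree.symm)
        exact ⟨k, hconj1.trans hconj2⟩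

/-! ### Existence of squares of every Fibonacci order -/

lemma quasi (m₀ : ℕ) : ∀ t, t < Nat.fib (m₀+2) → fibWord (Nat.fib (m₀+3) + t) = fibWord t := by
  intro t ht
  have hfib := Nat.fib_add_two (n := m₀+2)
  rw [show m₀+2+1 = m₀+3 from rfl] at hfib
  have hlt : Nat.fib (m₀+3) + t < Nat.fib (m₀+2+2) := by omega
  rw [f_eq_W (k := m₀+2) hlt]
  rw [show m₀+2 = (m₀+1)+1 from rfl, W_rec]
  rw [List.getD_append_right _ _ _ _
    (by rw [W_len, show m₀+1+2 = m₀+3 from rfl]; omega)]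
  rw [W_len]
  rw [show Nat.fib (m₀+3) + t - Nat.fib (m₀+1+2) = t by
    rw [show m₀+1+2 = m₀+3 from rfl]; omega]
  exact (f_eq_W (k := m₀) ht).symm

/-- For n ≥ 1, the Fibonacci word contains a square of order n iff n is a
Fibonacci number F_m with m ≥ 2. -/
theorem fibWord_square_orders :
    ∀ n : ℕ, 1 ≤ n →
      ((∃ i : ℕ, ∀ t < n, fibWord (i + t) = fibWord (i + n + t)) ↔
        ∃ m : ℕ, 2 ≤ m ∧ n = Nat.fib m) := by
  intro n hn
  constructor
  · rintro ⟨i, hsq⟩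
    obtain ⟨k, hconj⟩ := main_claim n hn i (fun t ht => hsq t ht)
    refine ⟨k+2, by omega, ?_⟩
    have := hconj.length
    rwa [xW_length, W_len] at this
  · rintro ⟨m, hm, rfl⟩
    obtain ⟨m₀, rfl⟩ : ∃ m₀, m = m₀+2 := ⟨m-2, by omega⟩
    refine ⟨Nat.fib (m₀+3), ?_⟩
    intro t ht
    have h1 : fibWord (Nat.fib (m₀+3) + t) = fibWord t := quasi m₀ t ht
    have h2 : fibWord (Nat.fib (m₀+4) + t) = fibWord t := by
      have := quasi (m₀+1) t (lt_of_lt_of_le ht (Nat.fib_mono (by omega)))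
      rwa [show m₀+1+3 = m₀+4 from rfl] at this
    have hf : Nat.fib (m₀+3) + Nat.fib (m₀+2) + t = Nat.fib (m₀+4) + t := by
      have h := Nat.fib_add_two (n := m₀+2)
      rw [show m₀+2+2 = m₀+4 from rfl, show m₀+2+1 = m₀+3 from rfl] at h
      omega
    rw [h1, hf]
    exact h2.symm
end

section
/- For n ≥ 1 let ℓ(n) be the smallest integer that occurs as the least period of some length-n factor of the infinite Fibonacci word f. Then ℓ(n) = F_j whenever j ≥ 1 and L_j − 1 ≤ n ≤ L_{j+1} − 2, where L_j denotes the j-th Lucas number. -/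
/-- p ≥ 1 is a period of the finite word x. -/
def HasPeriod (x : List ℕ) (p : ℕ) : Prop :=
  1 ≤ p ∧ ∀ i : ℕ, i + p < x.length → x.getD i 0 = x.getD (i + p) 0

/-- The Lucas numbers: L_0 = 2, L_1 = 1, L_{n+2} = L_n + L_{n+1}. -/
def lucas : ℕ → ℕ
  | 0 => 2
  | 1 => 1
  | n + 2 => lucas n + lucas (n + 1)

/-!
Write `wₖ = φᵏ(1)`, so `w₀ = 1`, `w₁ = 0` and `wₖ₊₂ = wₖ₊₁ wₖ`. The upper bound comes from the
factor `φᵏ(0010) = wₖ₊₁ wₖ₊₁ wₖ wₖ₊₁` of `f`: since `wₖ₊₁ wₖ` and `wₖ wₖ₊₁` differ only in their last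
two letters, dropping the last two letters leaves a word of length `L_{k+3} - 2` with period
`|wₖ₊₁| = F_{k+2}`.

For the lower bound, `f` is the mechanical word `fᵤ = ⌊(u + 2)α⌋ - ⌊(u + 1)α⌋` with
`α = (3 - √5)/2 = ψ²`, where `ψ = (1 - √5)/2`. A period `p` of a factor of length `n` makes
`s ↦ ⌊(s + p)α⌋ - ⌊sα⌋` constant on `n - p + 1` consecutive integers. Since `Fₖα ≡ ψᵏ (mod 1)`, the
multiples `uα` with `1 ≤ u < Fₖ₊₁` stay at distance at least `|ψ|ᵏ` from the integers, while the
first `F_{M+2}` points of the rotation by `α` come within `|ψ|ᴹ` above every point of the circle.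
For `p < F_j` and `n ≥ L_j - 1` these two facts put both a carry and a non-carry into the window.
-/

open Nat (fib fib_add_two fib_mono fib_pos le_fib_add_one)
open Real
open scoped goldenRatio

namespace FibonacciWord

/-! ### Standard words and a factor with period `F_j` -/

lemma fibPhi_append (u v : List ℕ) : fibPhi (u ++ v) = fibPhi u ++ fibPhi v := by
  simp only [fibPhi, List.map_append, List.flatten_append]

lemma fibPhi_iterate_append (k : ℕ) (u v : List ℕ) :
    fibPhi^[k] (u ++ v) = fibPhi^[k] u ++ fibPhi^[k] v := by
  induction k generalizing u v with
  | zero => rfl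
  | succ k ih => simp only [Function.iterate_succ_apply, fibPhi_append, ih]

lemma _root_.List.IsInfix.fibPhi_iterate {u v : List ℕ} (h : u <:+: v) (k : ℕ) :
    fibPhi^[k] u <:+: fibPhi^[k] v := by
  obtain ⟨s, e, rfl⟩ := h
  exact ⟨fibPhi^[k] s, fibPhi^[k] e, by simp only [fibPhi_iterate_append]⟩

/-- `1, 0, 01, 010, 01001, …`: the standard Fibonacci words, shifted by one. -/
def stdWord (k : ℕ) : List ℕ := fibPhi^[k] [1]

lemma stdWord_succ (k : ℕ) : stdWord (k + 1) = fibPhi^[k] [0] :=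
  Function.iterate_succ_apply _ _ _

lemma stdWord_succ' (k : ℕ) : stdWord (k + 1) = fibPhi (stdWord k) :=
  Function.iterate_succ_apply' _ _ _

lemma stdWord_add_two (k : ℕ) : stdWord (k + 2) = stdWord (k + 1) ++ stdWord k := by
  induction k with
  | zero => rfl
  | succ k ih =>
    calc stdWord (k + 3) = fibPhi (stdWord (k + 1) ++ stdWord k) := by rw [stdWord_succ', ih]
      _ = stdWord (k + 2) ++ stdWord (k + 1) := by
        rw [fibPhi_append, ← stdWord_succ', ← stdWord_succ']

lemma length_stdWord : ∀ k, (stdWord k).length = fib (k + 1)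
  | 0 => rfl
  | 1 => rfl
  | k + 2 => by
    rw [stdWord_add_two, List.length_append, length_stdWord (k + 1), length_stdWord k,
      fib_add_two (n := k + 1), add_comm]

lemma stdWord_succ_prefix_of_le {k m : ℕ} (h : k ≤ m) : stdWord (k + 1) <+: stdWord (m + 1) := by
  induction m, h using Nat.le_induction with
  | base => exact List.prefix_refl _
  | succ m _ ih => exact ih.trans ⟨stdWord m, (stdWord_add_two m).symm⟩

lemma getD_stdWord_succ {k t : ℕ} (ht : t < fib (k + 2)) :
    (stdWord (k + 1)).getD t 0 = fibWord t := by
  have getD_eq (m : ℕ) (hm : t < fib (m + 2)) (hle : m ≤ k + t + 2) :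
      (stdWord (m + 1)).getD t 0 = (stdWord (k + t + 3)).getD t 0 := by
    have hlen : t < (stdWord (m + 1)).length := by rwa [length_stdWord]
    rw [List.getD_eq_getElem _ _ hlen, List.getD_eq_getElem,
      (stdWord_succ_prefix_of_le hle).getElem hlen]
  have ht' : t < fib (t + 4) := by have := le_fib_add_one (t + 4); omega
  rw [getD_eq k ht (by omega), ← getD_eq (t + 2) ht' (by omega), fibWord, stdWord_succ]

lemma fibWord_fib_add {m r : ℕ} (hr : r < fib (m + 2)) :
    fibWord (fib (m + 3) + r) = fibWord r := by
  have hlen : (stdWord (m + 1 + 1)).length = fib (m + 3) := length_stdWord _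
  have hlt : fib (m + 3) + r < fib (m + 4) := by
    have : fib (m + 4) = fib (m + 2) + fib (m + 3) := fib_add_two
    omega
  rw [← getD_stdWord_succ hr, ← getD_stdWord_succ (k := m + 2) hlt, stdWord_add_two,
    List.getD_append_right _ _ _ _ (by omega), hlen, Nat.add_sub_cancel_left]

lemma isFibFactor_of_infix {x : List ℕ} {k : ℕ} (h : x <:+: stdWord (k + 1)) : IsFibFactor x := by
  obtain ⟨s, e, hse⟩ := h
  refine ⟨s.length, List.ext_getElem (by simp) fun t ht _ => ?_⟩
  have hlen : s.length + x.length + e.length = fib (k + 2) := by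
    rw [← length_stdWord, ← hse]; simp [Nat.add_assoc]
  rw [List.getElem_map, List.getElem_range, ← getD_stdWord_succ (k := k) (by omega), ← hse,
    List.append_assoc, List.getD_append_right _ _ _ _ (by omega), Nat.add_sub_cancel_left,
    List.getD_append _ _ _ _ ht, List.getD_eq_getElem]

lemma hasPeriod_of_drop_prefix {x : List ℕ} {p : ℕ} (hp : 1 ≤ p) (h : x.drop p <+: x) :
    HasPeriod x p := by
  refine ⟨hp, fun i hi => ?_⟩
  have e := h.getElem (i := i) (by simp; omega)
  simp only [List.getElem_drop] at e
  rw [List.getD_eq_getElem _ _ (by omega), List.getD_eq_getElem _ _ hi, ← e]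
  simp only [Nat.add_comm]

lemma _root_.HasPeriod.take {x : List ℕ} {p : ℕ} (h : HasPeriod x p) (n : ℕ) :
    HasPeriod (x.take n) p := by
  refine ⟨h.1, fun i hi => ?_⟩
  simp only [List.length_take] at hi
  rw [List.getD_eq_getElem _ _ (by simp; omega), List.getD_eq_getElem _ _ (by simp; omega),
    List.getElem_take, List.getElem_take, ← List.getD_eq_getElem, ← List.getD_eq_getElem]
  exact h.2 i (by omega)

lemma stdWord_near_commute (k : ℕ) : ∃ (P : List ℕ) (c d : ℕ),
    stdWord (k + 1) ++ stdWord k = P ++ [c, d] ∧ stdWord k ++ stdWord (k + 1) = P ++ [d, c] := by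
  induction k with
  | zero => exact ⟨[], 0, 1, rfl, rfl⟩
  | succ k ih =>
    obtain ⟨P, c, d, h₁, h₂⟩ := ih
    refine ⟨stdWord (k + 1) ++ P, d, c, ?_, ?_⟩
    · rw [stdWord_add_two, List.append_assoc, h₂, List.append_assoc]
    · rw [stdWord_add_two, ← List.append_assoc, List.append_assoc _ P, ← h₁, List.append_assoc]

lemma fibPhi_iterate_0010 (k : ℕ) : fibPhi^[k] [0, 0, 1, 0] =
    stdWord (k + 1) ++ (stdWord (k + 1) ++ (stdWord k ++ stdWord (k + 1))) := by
  rw [show [0, 0, 1, 0] = [0] ++ ([0] ++ ([1] ++ [0])) from rfl]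
  simp only [fibPhi_iterate_append, ← stdWord_succ]
  rfl

lemma lucas_succ : ∀ k, lucas (k + 1) = fib k + fib (k + 2)
  | 0 => rfl
  | 1 => rfl
  | k + 2 => by
    have h₁ : lucas (k + 1) = fib k + fib (k + 2) := lucas_succ k
    have h₂ : lucas (k + 2) = fib (k + 1) + fib (k + 3) := lucas_succ (k + 1)
    have : fib (k + 2) = fib k + fib (k + 1) := fib_add_two
    have : fib (k + 3) = fib (k + 1) + fib (k + 2) := fib_add_two
    have : fib (k + 4) = fib (k + 2) + fib (k + 3) := fib_add_two
    show lucas (k + 1) + lucas (k + 2) = fib (k + 2) + fib (k + 4)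
    omega

lemma exists_infix_hasPeriod_fib (k : ℕ) : ∃ y : List ℕ, y <:+: stdWord (k + 5) ∧
    y.length + 2 = lucas (k + 3) ∧ HasPeriod y (fib (k + 2)) := by
  obtain ⟨P, c, d, h₁, h₂⟩ := stdWord_near_commute k
  have hY₁ : fibPhi^[k] [0, 0, 1, 0] = stdWord (k + 1) ++ (stdWord (k + 1) ++ P) ++ [d, c] := by
    rw [fibPhi_iterate_0010, h₂]; simp only [List.append_assoc]
  have hY₂ : fibPhi^[k] [0, 0, 1, 0] = stdWord (k + 1) ++ P ++ ([c, d] ++ stdWord (k + 1)) := by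
    rw [fibPhi_iterate_0010, ← List.append_assoc (stdWord (k + 1)) (stdWord k), h₁]
    simp only [List.append_assoc]
  have hA : (stdWord (k + 1)).length = fib (k + 2) := length_stdWord _
  have hinfix : fibPhi^[k] [0, 0, 1, 0] <:+: stdWord (k + 5) := by
    have h : [0, 0, 1, 0] <:+: stdWord 5 := ⟨[0, 1], [1, 0], rfl⟩
    have h' := h.fibPhi_iterate k
    rwa [stdWord, ← Function.iterate_add_apply] at h'
  refine ⟨stdWord (k + 1) ++ (stdWord (k + 1) ++ P), ?_, ?_, hasPeriod_of_drop_prefix ?_ ?_⟩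
  · exact (List.prefix_append _ _).isInfix.trans (hY₁ ▸ hinfix)
  · have hB : (stdWord k).length = fib (k + 1) := length_stdWord k
    have hY := congrArg List.length hY₁
    rw [fibPhi_iterate_0010] at hY
    simp only [List.length_append, List.length_cons, List.length_nil, hA, hB] at hY
    have hL : lucas (k + 3) = fib (k + 2) + fib (k + 4) := lucas_succ (k + 2)
    have : fib (k + 3) = fib (k + 1) + fib (k + 2) := fib_add_two
    have : fib (k + 4) = fib (k + 2) + fib (k + 3) := fib_add_two
    simp only [List.length_append, hA]
    omega
  · exact fib_pos.mpr (by omega)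
  · rw [List.drop_left' hA]
    exact List.prefix_of_prefix_length_le ⟨_, hY₂.symm⟩ ⟨_, hY₁.symm⟩ (by simp)

lemma exists_isFibFactor_hasPeriod_fib {j n : ℕ} (hj : 1 ≤ j) (hn : n + 2 ≤ lucas (j + 1)) :
    ∃ x, IsFibFactor x ∧ x.length = n ∧ HasPeriod x (fib j) := by
  obtain ⟨k, hfib, hlucas⟩ : ∃ k, fib j = fib (k + 2) ∧ lucas (j + 1) ≤ lucas (k + 3) := by
    rcases Nat.lt_or_ge j 2 with h | h
    · exact ⟨0, by interval_cases j; rfl, by interval_cases j; decide⟩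
    · exact ⟨j - 2, by congr 1; omega, by rw [show j - 2 + 3 = j + 1 by omega]⟩
  obtain ⟨y, hy, hlen, hper⟩ := exists_infix_hasPeriod_fib k
  exact ⟨y.take n, isFibFactor_of_infix ((List.take_prefix n y).isInfix.trans hy),
    by simp only [List.length_take]; omega, hfib ▸ HasPeriod.take hper n⟩

/-! ### The Fibonacci word as a rotation word -/

lemma floor_add_sub_floor_sub_floor {R : Type*} [Ring R] [LinearOrder R] [FloorRing R] (a b : R) :
    ((⌊a + b⌋ - ⌊a⌋ - ⌊b⌋ : ℤ) : R) = Int.fract a + Int.fract b - Int.fract (a + b) := by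
  simp only [Int.fract]; push_cast; abel

section FloorRing

variable {R : Type*} [Field R] [LinearOrder R] [IsStrictOrderedRing R] [FloorRing R]

lemma le_fract_of_forall_le_abs_sub {x δ : R} (h : ∀ z : ℤ, δ ≤ |x - z|) :
    δ ≤ Int.fract x ∧ δ ≤ 1 - Int.fract x := by
  have h₀ := h ⌊x⌋
  have h₁ := h (⌊x⌋ + 1)
  rw [← Int.fract, abs_of_nonneg (Int.fract_nonneg x)] at h₀
  rw [Int.cast_add, Int.cast_one, ← sub_sub, ← Int.fract,
    abs_of_neg (by linarith [Int.fract_lt_one x])] at h₁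
  exact ⟨h₀, by linarith⟩

lemma floor_add_eq_floor {x ε δ : R} (hε : |ε| < δ) (h : ∀ z : ℤ, δ ≤ |x - z|) :
    ⌊x + ε⌋ = ⌊x⌋ := by
  obtain ⟨h₀, h₁⟩ := le_fract_of_forall_le_abs_sub h
  have := abs_lt.mp (hε.trans_le h₀)
  have := abs_lt.mp (hε.trans_le h₁)
  rw [Int.floor_eq_iff]
  constructor <;> linarith [Int.floor_add_fract x]

lemma floor_add_sub_floor_sub_floor_pos {a b : R} (h : Int.fract (a + b) < Int.fract b) :
    0 < ⌊a + b⌋ - ⌊a⌋ - ⌊b⌋ := by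
  rw [← Int.cast_pos (R := R), floor_add_sub_floor_sub_floor]
  linarith [Int.fract_nonneg a]

lemma floor_add_sub_floor_sub_floor_nonpos {a b : R} (h : Int.fract a < 1 - Int.fract b) :
    ⌊a + b⌋ - ⌊a⌋ - ⌊b⌋ ≤ 0 := by
  rw [← Int.lt_add_one_iff, ← Int.cast_lt (R := R), floor_add_sub_floor_sub_floor]
  push_cast
  linarith [Int.fract_nonneg (a + b)]

end FloorRing

noncomputable def α : ℝ := 2 - φ

lemma abs_goldenConj : |ψ| = -ψ := abs_of_neg goldenConj_neg

lemma α_eq : α = |ψ| ^ 2 := by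
  rw [α, sq_abs, goldenConj_sq]; linarith [goldenRatio_add_goldenConj]

lemma α_mem : α ∈ Set.Ico (1 / 3) (2 / 5) := by
  have h5 : √5 ^ 2 = 5 := sq_sqrt (by norm_num)
  have := sqrt_nonneg 5
  rw [α, goldenRatio]
  constructor <;> nlinarith

lemma abs_goldenConj_lt_one : |ψ| < 1 := by
  rw [abs_goldenConj]; linarith [neg_one_lt_goldenConj]

lemma pow_abs_goldenConj_add_two (k : ℕ) : |ψ| ^ (k + 2) = |ψ| ^ k - |ψ| ^ (k + 1) := by
  have h : |ψ| ^ 2 = 1 - |ψ| := by rw [sq_abs, goldenConj_sq, abs_goldenConj]; ring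
  rw [pow_add, h]; ring

lemma pow_abs_goldenConj_le {m n : ℕ} (h : m ≤ n) : |ψ| ^ n ≤ |ψ| ^ m :=
  pow_le_pow_of_le_one (abs_nonneg _) abs_goldenConj_lt_one.le h

lemma pow_abs_goldenConj_lt {m n : ℕ} (h : m < n) : |ψ| ^ n < |ψ| ^ m :=
  pow_lt_pow_right_of_lt_one₀ (abs_pos.mpr goldenConj_ne_zero) abs_goldenConj_lt_one h

lemma fib_mul_α (n : ℕ) : (fib n : ℝ) * α = ((2 * fib n - fib (n + 1) : ℤ) : ℝ) + ψ ^ n := by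
  have := fib_succ_sub_goldenRatio_mul_fib n
  push_cast; rw [α]; linarith

lemma pow_le_abs_fib_mul_α_sub {k : ℕ} (hk : 2 ≤ k) (z : ℤ) : |ψ| ^ k ≤ |fib k * α - z| := by
  rw [fib_mul_α, add_sub_right_comm, ← Int.cast_sub]
  set w := 2 * (fib k : ℤ) - fib (k + 1) - z
  rcases eq_or_ne w 0 with hw | hw
  · rw [hw, Int.cast_zero, zero_add, abs_pow]
  · have hw' : (1 : ℝ) ≤ |(w : ℝ)| := by exact_mod_cast Int.one_le_abs hw
    have hsmall : |ψ| ^ k < 2 / 5 := (pow_abs_goldenConj_le hk).trans_lt (α_eq ▸ α_mem.2)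
    have := abs_sub_abs_le_abs_add (w : ℝ) (ψ ^ k)
    rw [abs_pow] at this
    linarith

lemma pow_succ_le_abs_fib_add_mul_α_sub {k r : ℕ} (h : ∀ z : ℤ, |ψ| ^ k ≤ |r * α - z|)
    (z : ℤ) : |ψ| ^ (k + 1) ≤ |((fib (k + 2) + r : ℕ) : ℝ) * α - z| := by
  obtain ⟨c, hc⟩ : ∃ c : ℤ, (fib (k + 2) : ℝ) * α = c + ψ ^ (k + 2) := ⟨_, fib_mul_α _⟩
  have e : ((fib (k + 2) + r : ℕ) : ℝ) * α - z = (r * α - (z - c : ℤ)) + ψ ^ (k + 2) := by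
    push_cast; rw [add_mul, hc]; ring
  have := abs_sub_abs_le_abs_add (r * α - (z - c : ℤ)) (ψ ^ (k + 2))
  rw [abs_pow] at this
  rw [e]
  linarith [h (z - c), pow_abs_goldenConj_add_two k]

theorem pow_le_abs_mul_α_sub : ∀ (k : ℕ) {u : ℕ}, 1 ≤ u → u < fib (k + 1) →
    ∀ z : ℤ, |ψ| ^ k ≤ |u * α - z|
  | 0, u, h₁, h₂, _ => absurd h₂ (by simp; omega)
  | 1, u, h₁, h₂, _ => absurd h₂ (by simp [fib_add_two]; omega)
  | k + 2, u, h₁, h₂, z => by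
    rcases lt_trichotomy u (fib (k + 2)) with h | rfl | h
    · exact (pow_abs_goldenConj_le (by omega)).trans (pow_le_abs_mul_α_sub (k + 1) h₁ h z)
    · exact pow_le_abs_fib_mul_α_sub (by omega) z
    · obtain ⟨r, rfl⟩ := Nat.exists_eq_add_of_lt h
      have hr : r + 1 < fib (k + 1) := by
        have : fib (k + 3) = fib (k + 1) + fib (k + 2) := fib_add_two
        have : fib (k + 2) + r + 1 < fib (k + 3) := h₂
        omega
      have := pow_succ_le_abs_fib_add_mul_α_sub (pow_le_abs_mul_α_sub k (by omega) hr) z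
      exact (pow_abs_goldenConj_le (by omega)).trans this

/-- The lower mechanical word of slope and intercept `θ`. -/
noncomputable def mechWord (θ : ℝ) (u : ℕ) : ℤ := ⌊((u + 2 : ℕ) : ℝ) * θ⌋ - ⌊((u + 1 : ℕ) : ℝ) * θ⌋

lemma floor_fib_add_mul_α {m s : ℕ} (hs₁ : 1 ≤ s) (hs : s < fib (m + 1)) :
    ⌊((fib (m + 1) + s : ℕ) : ℝ) * α⌋ = ⌊(s : ℝ) * α⌋ + (2 * fib (m + 1) - fib (m + 2)) := by
  have e : ((fib (m + 1) + s : ℕ) : ℝ) * α =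
      (s * α + ψ ^ (m + 1)) + ((2 * fib (m + 1) - fib (m + 2) : ℤ) : ℝ) := by
    push_cast; rw [add_mul, fib_mul_α]; push_cast; ring
  have hε : |ψ ^ (m + 1)| < |ψ| ^ m := by rw [abs_pow]; exact pow_abs_goldenConj_lt m.lt_succ_self
  rw [e, Int.floor_add_intCast, floor_add_eq_floor hε (pow_le_abs_mul_α_sub m hs₁ hs)]

lemma mechWord_α_fib_add {m r : ℕ} (hm : 2 ≤ m) (hr : r < fib (m + 2)) :
    mechWord α (fib (m + 3) + r) = mechWord α r := by
  have h3 : fib (m + 2 + 1) = fib (m + 1) + fib (m + 2) := fib_add_two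
  have h1 : 2 ≤ fib (m + 1) := fib_mono (show 3 ≤ m + 1 by omega)
  show ⌊((fib (m + 2 + 1) + (r + 2) : ℕ) : ℝ) * α⌋ - ⌊((fib (m + 2 + 1) + (r + 1) : ℕ) : ℝ) * α⌋ = _
  rw [floor_fib_add_mul_α (by omega) (by omega), floor_fib_add_mul_α (by omega) (by omega),
    mechWord]
  ring

lemma floor_nat_mul_α {k : ℕ} (hk : k ≤ 6) : ⌊(k : ℝ) * α⌋ = k / 3 := by
  obtain ⟨h₁, h₂⟩ := α_mem
  rw [Int.floor_eq_iff]
  interval_cases k <;> norm_num <;> constructor <;> linarith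

lemma fibWord_eq_mechWord_α : ∀ u, (fibWord u : ℤ) = mechWord α u := by
  suffices h : ∀ m, 2 ≤ m → ∀ t < fib (m + 3), (fibWord t : ℤ) = mechWord α t from fun u =>
    h (u + 2) (by omega) u (by have : u + 5 ≤ fib (u + 2 + 3) + 1 := le_fib_add_one _; omega)
  intro m hm
  induction m, hm using Nat.le_induction with
  | base =>
    intro t ht
    have ht : t < 5 := ht
    simp only [mechWord]
    rw [floor_nat_mul_α (by omega), floor_nat_mul_α (by omega)]
    interval_cases t <;> decide
  | succ m hm ih =>
    intro t ht
    have h4 : fib (m + 4) = fib (m + 2) + fib (m + 3) := fib_add_two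
    have ht : t < fib (m + 4) := ht
    rcases Nat.lt_or_ge t (fib (m + 3)) with h | h
    · exact ih t h
    · obtain ⟨r, rfl⟩ := Nat.exists_eq_add_of_le h
      have hr : r < fib (m + 2) := by omega
      rw [fibWord_fib_add hr, mechWord_α_fib_add hm hr]
      exact ih r (hr.trans_le (fib_mono (by omega)))

lemma fract_add_fib_mul_α_of_odd {n : ℕ} (hn : Odd n) {x : ℝ} (h : |ψ| ^ n ≤ Int.fract x) :
    Int.fract (x + fib n * α) = Int.fract x - |ψ| ^ n := by
  have hψ : ψ ^ n = -|ψ| ^ n := by rw [abs_goldenConj, hn.neg_pow, neg_neg]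
  rw [fib_mul_α, hψ, Int.fract_eq_iff]
  refine ⟨by linarith, by linarith [Int.fract_lt_one x, pow_nonneg (abs_nonneg ψ) n], ?_⟩
  exact ⟨⌊x⌋ + (2 * fib n - fib (n + 1)), by push_cast; rw [← Int.self_sub_fract]; ring⟩

theorem exists_fract_add_mul_α_lt : ∀ (M : ℕ) (x : ℝ),
    ∃ t < fib (M + 2), Int.fract (x + t * α) < |ψ| ^ M
  | 0, x => ⟨0, by simp, by simpa using Int.fract_lt_one x⟩
  | M + 1, x => by
    have shift (t n : ℕ) (hn : Odd n) (h : |ψ| ^ n ≤ Int.fract (x + t * α)) :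
        Int.fract (x + ((t + fib n : ℕ) : ℝ) * α) = Int.fract (x + t * α) - |ψ| ^ n := by
      rw [← fract_add_fib_mul_α_of_odd hn h]; push_cast; ring_nf
    have hpow := pow_abs_goldenConj_add_two
    rcases Nat.even_or_odd M with hM | hM
    · obtain ⟨t, ht, hx⟩ := exists_fract_add_mul_α_lt M x
      by_cases hlt : Int.fract (x + t * α) < |ψ| ^ (M + 1)
      · exact ⟨t, ht.trans_le (fib_mono (by omega)), hlt⟩
      refine ⟨t + fib (M + 1), ?_, ?_⟩
      · have : fib (M + 3) = fib (M + 1) + fib (M + 2) := fib_add_two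
        show _ < fib (M + 3)
        omega
      · rw [shift t (M + 1) hM.add_one (not_lt.mp hlt)]
        linarith [hpow M, pow_abs_goldenConj_le (show M + 1 ≤ M + 2 by omega)]
    · obtain ⟨K, rfl⟩ : ∃ K, M = K + 1 := ⟨M - 1, by obtain ⟨c, rfl⟩ := hM; omega⟩
      -- The remaining gap `[|ψ| ^ (K + 2), |ψ| ^ K)` is closed by moving down by `|ψ| ^ (K + 1)`
      -- or by `|ψ| ^ (K + 3)`.
      obtain ⟨t, ht, hx⟩ := exists_fract_add_mul_α_lt K x
      have h3 : fib (K + 3) = fib (K + 1) + fib (K + 2) := fib_add_two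
      have h4 : fib (K + 4) = fib (K + 2) + fib (K + 3) := fib_add_two
      by_cases hlt : Int.fract (x + t * α) < |ψ| ^ (K + 2)
      · exact ⟨t, ht.trans_le (fib_mono (by omega)), hlt⟩
      by_cases hge : |ψ| ^ (K + 1) ≤ Int.fract (x + t * α)
      · refine ⟨t + fib (K + 1), show _ < fib (K + 4) by omega, ?_⟩
        rw [shift t (K + 1) hM hge]
        linarith [hpow K]
      · refine ⟨t + fib (K + 3), show _ < fib (K + 4) by omega, ?_⟩
        rw [shift t (K + 3) (by simpa [Nat.odd_add_one, parity_simps] using hM)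
          ((pow_abs_goldenConj_le (by omega)).trans (not_lt.mp hlt))]
        linarith [hpow (K + 1)]

/-! ### No factor of length `L_j - 1` has a period below `F_j` -/

lemma floor_add_sub_floor_eq_of_mechWord {θ : ℝ} {i m p : ℕ}
    (h : ∀ t < m, mechWord θ (i + t) = mechWord θ (i + t + p)) {t : ℕ} (ht : t ≤ m) :
    ⌊((i + 1 + t + p : ℕ) : ℝ) * θ⌋ - ⌊((i + 1 + t : ℕ) : ℝ) * θ⌋ =
      ⌊((i + 1 + p : ℕ) : ℝ) * θ⌋ - ⌊((i + 1 : ℕ) : ℝ) * θ⌋ := by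
  induction t with
  | zero => rfl
  | succ t ih =>
    have e := h t (by omega)
    simp only [mechWord] at e
    rw [show i + t + 2 = i + 1 + (t + 1) by omega, show i + t + 1 = i + 1 + t by omega,
      show i + t + p + 2 = i + 1 + (t + 1) + p by omega,
      show i + t + p + 1 = i + 1 + t + p by omega] at e
    linarith [ih (by omega)]

lemma not_mechWord_α_periodic {i m p M : ℕ}
    (h : ∀ t < m, mechWord α (i + t) = mechWord α (i + t + p)) (hm : fib (M + 2) ≤ m + 1)
    (hp : ∀ z : ℤ, |ψ| ^ M ≤ |p * α - z|) : False := by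
  obtain ⟨hc₁, hc₂⟩ := le_fract_of_forall_le_abs_sub hp
  have cast_mul (a b : ℕ) : (a : ℝ) * α + b * α = ((a + b : ℕ) : ℝ) * α := by push_cast; ring
  -- `s + p` landing just above an integer forces a carry, `s` landing there forbids one.
  obtain ⟨t₁, ht₁, h₁⟩ := exists_fract_add_mul_α_lt M (((i + 1 + p : ℕ) : ℝ) * α)
  obtain ⟨t₂, ht₂, h₂⟩ := exists_fract_add_mul_α_lt M (((i + 1 : ℕ) : ℝ) * α)
  rw [cast_mul, show i + 1 + p + t₁ = i + 1 + t₁ + p by omega] at h₁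
  rw [cast_mul] at h₂
  have carry₁ := floor_add_sub_floor_sub_floor_pos (a := ((i + 1 + t₁ : ℕ) : ℝ) * α) (b := p * α)
    (by rw [cast_mul]; linarith)
  have carry₂ := floor_add_sub_floor_sub_floor_nonpos (a := ((i + 1 + t₂ : ℕ) : ℝ) * α)
    (b := p * α) (by linarith)
  rw [cast_mul] at carry₁ carry₂
  have := floor_add_sub_floor_eq_of_mechWord h (t := t₁) (by omega)
  have := floor_add_sub_floor_eq_of_mechWord h (t := t₂) (by omega)
  omega

lemma exists_pow_le_abs_mul_α_sub {k p : ℕ} (hp₀ : 1 ≤ p) (hp : p < fib (k + 3)) :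
    ∃ M, fib (M + 2) + p ≤ lucas (k + 3) ∧ ∀ z : ℤ, |ψ| ^ M ≤ |p * α - z| := by
  have hL : lucas (k + 3) = fib (k + 2) + fib (k + 4) := lucas_succ (k + 2)
  have h3 : fib (k + 3) = fib (k + 1) + fib (k + 2) := fib_add_two
  have h4 : fib (k + 4) = fib (k + 2) + fib (k + 3) := fib_add_two
  have h12 : fib (k + 1) ≤ fib (k + 2) := fib_mono (by omega)
  rcases lt_trichotomy p (fib (k + 2)) with h | rfl | h
  · exact ⟨k + 1, show fib (k + 3) + p ≤ _ by omega, pow_le_abs_mul_α_sub (k + 1) hp₀ h⟩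
  · exact ⟨k + 2, show fib (k + 4) + _ ≤ _ by omega, pow_le_abs_fib_mul_α_sub (by omega)⟩
  · obtain ⟨r, rfl⟩ := Nat.exists_eq_add_of_lt h
    refine ⟨k + 1, show fib (k + 3) + _ ≤ _ by omega, fun z => ?_⟩
    have := pow_succ_le_abs_fib_add_mul_α_sub (r := r + 1)
      (pow_le_abs_mul_α_sub k (by omega) (by omega)) z
    rwa [← Nat.add_assoc] at this

theorem fib_le_of_hasPeriod {x : List ℕ} {j p : ℕ} (hx : IsFibFactor x)
    (hlen : lucas j ≤ x.length + 1) (hp : HasPeriod x p) : fib j ≤ p := by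
  by_contra! hpj
  rcases Nat.lt_or_ge j 3 with hj | hj
  · have := hp.1
    interval_cases j <;> simp [fib_add_two] at hpj <;> omega
  obtain ⟨k, rfl⟩ := Nat.exists_eq_add_of_le' hj
  obtain ⟨i, hi⟩ := hx
  have hper (t : ℕ) (ht : t < x.length - p) : mechWord α (i + t) = mechWord α (i + t + p) := by
    have e := hp.2 t (by omega)
    rw [hi, List.getD_eq_getElem _ _ (by simp; omega), List.getD_eq_getElem _ _ (by simp; omega)]
      at e
    simp only [List.getElem_map, List.getElem_range, ← Nat.add_assoc] at e
    rw [← fibWord_eq_mechWord_α, ← fibWord_eq_mechWord_α, e]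
  obtain ⟨M, hM, hdist⟩ := exists_pow_le_abs_mul_α_sub hp.1 hpj
  exact not_mechWord_α_periodic hper (by omega) hdist

end FibonacciWord

open FibonacciWord in
/-- For n ≥ 1, the smallest integer occurring as the least period of some
length-n factor of the Fibonacci word equals F_j whenever j ≥ 1 and
L_j − 1 ≤ n ≤ L_{j+1} − 2. -/
theorem fibWord_smallest_least_period :
    ∀ j n : ℕ, 1 ≤ j → 1 ≤ n → lucas j ≤ n + 1 → n + 2 ≤ lucas (j + 1) →
      IsLeast {p : ℕ | ∃ x : List ℕ, IsFibFactor x ∧ x.length = n ∧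
          IsLeast {q : ℕ | HasPeriod x q} p}
        (Nat.fib j) := by
  intro j n hj _ hlow hhigh
  obtain ⟨x, hx, hlen, hper⟩ := exists_isFibFactor_hasPeriod_fib hj hhigh
  refine ⟨⟨x, hx, hlen, hper, fun q hq => fib_le_of_hasPeriod hx (hlen ▸ hlow) hq⟩, ?_⟩
  rintro p ⟨y, hy, hylen, hyp, -⟩
  exact fib_le_of_hasPeriod hy (hylen ▸ hlow) hyp
end
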